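/- Suppose v(2) > 0 and let k ≥ 1 be an integer (corresponding to Kodaira type I_m^* with m = 2k even and residue characteristic 2). Assume v(a₁) ≥ 1, v(a₂) = 1, v(a₃) ≥ k + 2, v(a₄) = k + 2 and v(a₆) ≥ 2k + 3. Let P = (x, y) be a point on E with v(x) > 0 satisfying the Weierstrass equation. Then: (a) if v(x) = 1, then v(φ₂(P)) = v(ψ₃(P)) = 4 and v(ψ₂²(P)) ≥ 4; (b) the range 1 < v(x) < k + 1 is impossible for a point with v(y) > 0; (c) if v(x) ≥ k + 1, then v(φ₂(P)) = v(ψ₃(P)) = 2k + 4 (= m + 4) and v(ψ₂²(P)) ≥ 2k + 4. -/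

import Mathlib

/-!
Every `bᵢ` and every term of `φ₂`, `ψ₂²` and `ψ₃` is estimated by the ultrametric inequality.
In `φ₂` one term strictly dominates: `x⁴` when `v(x) = 1`, and `b₈ = -a₄² + (higher terms)` when
`v(x) ≥ k + 1`; the identity `ψ₃ = x ψ₂² - φ₂` then transfers the valuation of `φ₂` to `ψ₃`.
For `1 < v(x) < k + 1` the right-hand side of the Weierstrass equation has the odd valuation
`2 v(x) + 1`, carried by `a₂x²`, which the left-hand side `y (y + a₁x + a₃)` cannot attain.
-/

open Polynomial

theorem WithTop.coe_add_one_le_of_lt {n : ℤ} {a : WithTop ℤ} (h : (n : WithTop ℤ) < a) :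
    ((n + 1 : ℤ) : WithTop ℤ) ≤ a := by
  induction a with
  | top => exact le_top
  | coe a => exact WithTop.coe_le_coe.2 (WithTop.coe_lt_coe.1 h)

theorem WithTop.eq_zero_of_eq_add_self {a : WithTop ℤ} (ha : a ≠ ⊤) (h : a = a + a) : a = 0 := by
  lift a to ℤ using ha
  norm_cast at h ⊢
  omega

namespace AddValuation

variable {R : Type*} [Ring R] (v : AddValuation R (WithTop ℤ))

theorem coe_le_map_mul {x y : R} {a b c : ℤ} (hx : (a : WithTop ℤ) ≤ v x)
    (hy : (b : WithTop ℤ) ≤ v y) (h : c ≤ a + b) : (c : WithTop ℤ) ≤ v (x * y) := by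
  rw [v.map_mul]
  exact (WithTop.coe_le_coe.2 h).trans (by rw [WithTop.coe_add]; exact add_le_add hx hy)

theorem coe_le_map_pow {x : R} {a c : ℤ} {n : ℕ} (hx : (a : WithTop ℤ) ≤ v x)
    (h : c ≤ n * a) : (c : WithTop ℤ) ≤ v (x ^ n) := by
  rw [v.map_pow]
  refine (WithTop.coe_le_coe.2 h).trans ?_
  rw [← nsmul_eq_mul, WithTop.coe_nsmul]
  exact nsmul_le_nsmul_right hx n

theorem map_pow_of_eq_coe {x : R} {a : ℤ} (n : ℕ) (hx : v x = a) :
    v (x ^ n) = ((n * a : ℤ) : WithTop ℤ) := by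
  rw [v.map_pow, hx, ← nsmul_eq_mul, WithTop.coe_nsmul]

theorem map_eq_coe_of_sub {x y : R} {c : ℤ} (hx : v x = c)
    (hyx : ((c + 1 : ℤ) : WithTop ℤ) ≤ v (y - x)) : v y = c := by
  rw [v.map_eq_of_lt_sub (hx ▸ (WithTop.coe_lt_coe.2 (lt_add_one c)).trans_le hyx), hx]

theorem coe_le_map_four (h2 : ((1 : ℤ) : WithTop ℤ) ≤ v 2) : ((2 : ℤ) : WithTop ℤ) ≤ v 4 := by
  rw [show (4 : R) = 2 * 2 by norm_num]
  exact v.coe_le_map_mul h2 h2 (by omega)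

/-- In `y (y + t)` with `v t > n`, either `v y ≤ n` and the valuation is the even number `2 v y`,
or both factors have valuation `> n`. -/
theorem map_mul_add_ne {y t : R} {n : ℤ} (ht : ((n + 1 : ℤ) : WithTop ℤ) ≤ v t) :
    v (y * (y + t)) ≠ ((2 * n + 1 : ℤ) : WithTop ℤ) := by
  rcases le_or_gt (v y) n with hy | hy
  · obtain ⟨m, hm⟩ := WithTop.ne_top_iff_exists.1 (ne_top_of_le_ne_top WithTop.coe_ne_top hy)
    have hyt : v (y + t) = m := by
      rw [add_comm, v.map_add_eq_of_lt_right, ← hm]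
      exact hy.trans_lt ((WithTop.coe_lt_coe.2 (lt_add_one n)).trans_le ht)
    rw [v.map_mul, hyt, ← hm, ← WithTop.coe_add, Ne, WithTop.coe_inj]
    omega
  · have hy' := WithTop.coe_add_one_le_of_lt hy
    exact ne_of_gt ((WithTop.coe_lt_coe.2 (lt_add_one _)).trans_le
      (v.coe_le_map_mul hy' (v.map_le_add hy' ht) (by omega)))

end AddValuation

namespace WeierstrassCurve

variable {R : Type*} [CommRing R] (v : AddValuation R (WithTop ℤ)) (W : WeierstrassCurve R)
  {k : ℤ} {x y : R}

theorem eval_Φ_two (x : R) : (W.Φ 2).eval x = x ^ 4 - W.b₄ * x ^ 2 - 2 * W.b₆ * x - W.b₈ := by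
  simp [Φ_two, mul_assoc]

theorem eval_Ψ₂Sq (x : R) : W.Ψ₂Sq.eval x = 4 * x ^ 3 + W.b₂ * x ^ 2 + 2 * W.b₄ * x + W.b₆ := by
  simp [Ψ₂Sq, mul_assoc]

theorem eval_Ψ₃_eq (x : R) : W.Ψ₃.eval x = x * W.Ψ₂Sq.eval x - (W.Φ 2).eval x := by
  rw [eval_Ψ₂Sq, eval_Φ_two]
  simp only [Ψ₃, eval_add, eval_mul, eval_pow, eval_C, eval_X, eval_ofNat]
  ring

theorem coe_le_valuation_b₂ (h2 : ((1 : ℤ) : WithTop ℤ) ≤ v 2)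
    (ha₁ : ((1 : ℤ) : WithTop ℤ) ≤ v W.a₁) (ha₂ : ((1 : ℤ) : WithTop ℤ) ≤ v W.a₂) :
    ((2 : ℤ) : WithTop ℤ) ≤ v W.b₂ :=
  v.map_le_add (v.coe_le_map_pow ha₁ (by omega))
    (v.coe_le_map_mul (v.coe_le_map_four h2) ha₂ (by omega))

theorem coe_le_valuation_b₄ (h2 : ((1 : ℤ) : WithTop ℤ) ≤ v 2)
    (ha₁ : ((1 : ℤ) : WithTop ℤ) ≤ v W.a₁) (ha₃ : ((k + 2 : ℤ) : WithTop ℤ) ≤ v W.a₃)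
    (ha₄ : ((k + 2 : ℤ) : WithTop ℤ) ≤ v W.a₄) : ((k + 3 : ℤ) : WithTop ℤ) ≤ v W.b₄ :=
  v.map_le_add (v.coe_le_map_mul h2 ha₄ (by omega)) (v.coe_le_map_mul ha₁ ha₃ (by omega))

theorem coe_le_valuation_b₆ (h2 : ((1 : ℤ) : WithTop ℤ) ≤ v 2)
    (ha₃ : ((k + 2 : ℤ) : WithTop ℤ) ≤ v W.a₃) (ha₆ : ((2 * k + 3 : ℤ) : WithTop ℤ) ≤ v W.a₆) :
    ((2 * k + 4 : ℤ) : WithTop ℤ) ≤ v W.b₆ :=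
  v.map_le_add (v.coe_le_map_pow ha₃ (by omega))
    (v.coe_le_map_mul (v.coe_le_map_four h2) ha₆ (by omega))

theorem valuation_b₈ (h2 : ((1 : ℤ) : WithTop ℤ) ≤ v 2)
    (ha₁ : ((1 : ℤ) : WithTop ℤ) ≤ v W.a₁) (ha₂ : ((1 : ℤ) : WithTop ℤ) ≤ v W.a₂)
    (ha₃ : ((k + 2 : ℤ) : WithTop ℤ) ≤ v W.a₃) (ha₄ : v W.a₄ = ((k + 2 : ℤ) : WithTop ℤ))
    (ha₆ : ((2 * k + 3 : ℤ) : WithTop ℤ) ≤ v W.a₆) :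
    v W.b₈ = ((2 * k + 4 : ℤ) : WithTop ℤ) := by
  refine v.map_eq_coe_of_sub (x := -W.a₄ ^ 2) ?_ ?_
  · rw [v.map_neg, v.map_pow_of_eq_coe 2 ha₄]
    congr 1
    ring
  · rw [show W.b₈ - -W.a₄ ^ 2 = W.a₁ ^ 2 * W.a₆ + 4 * W.a₂ * W.a₆ - W.a₁ * W.a₃ * W.a₄ +
      W.a₂ * W.a₃ ^ 2 by rw [b₈]; ring]
    have h4a₂ := v.coe_le_map_mul (c := 3) (v.coe_le_map_four h2) ha₂ (by omega)
    refine v.map_le_add (v.map_le_sub (v.map_le_add ?_ ?_) ?_) ?_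
    · exact v.coe_le_map_mul (v.coe_le_map_pow (c := 2) ha₁ (by omega)) ha₆ (by omega)
    · exact v.coe_le_map_mul h4a₂ ha₆ (by omega)
    · exact v.coe_le_map_mul (v.coe_le_map_mul (c := k + 3) ha₁ ha₃ (by omega)) ha₄.ge (by omega)
    · exact v.coe_le_map_mul ha₂ (v.coe_le_map_pow (c := 2 * k + 4) ha₃ (by omega)) (by omega)

theorem valuation_x_notMem_Ioo (ha₁ : ((1 : ℤ) : WithTop ℤ) ≤ v W.a₁)
    (ha₂ : v W.a₂ = ((1 : ℤ) : WithTop ℤ)) (ha₃ : ((k + 2 : ℤ) : WithTop ℤ) ≤ v W.a₃)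
    (ha₄ : ((k + 2 : ℤ) : WithTop ℤ) ≤ v W.a₄) (ha₆ : ((2 * k + 3 : ℤ) : WithTop ℤ) ≤ v W.a₆)
    (hP : W.toAffine.Equation x y) :
    v x ∉ Set.Ioo ((1 : ℤ) : WithTop ℤ) ((k + 1 : ℤ) : WithTop ℤ) := by
  rintro ⟨h1, hk1⟩
  obtain ⟨n, hn⟩ := WithTop.ne_top_iff_exists.1 hk1.ne_top
  have h1n : 1 < n := WithTop.coe_lt_coe.1 (hn ▸ h1)
  have hnk : n < k + 1 := WithTop.coe_lt_coe.1 (hn ▸ hk1)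
  have hrhs : v (x ^ 3 + W.a₂ * x ^ 2 + W.a₄ * x + W.a₆) = ((2 * n + 1 : ℤ) : WithTop ℤ) := by
    refine v.map_eq_coe_of_sub (x := W.a₂ * x ^ 2) ?_ ?_
    · rw [v.map_mul, ha₂, v.map_pow_of_eq_coe 2 hn.symm, ← WithTop.coe_add]
      congr 1
      ring
    · rw [show x ^ 3 + W.a₂ * x ^ 2 + W.a₄ * x + W.a₆ - W.a₂ * x ^ 2 = x ^ 3 + W.a₄ * x + W.a₆ by
        ring]
      refine v.map_le_add (v.map_le_add ?_ ?_) ((WithTop.coe_le_coe.2 (by omega)).trans ha₆)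
      · exact v.coe_le_map_pow hn.le (by omega)
      · exact v.coe_le_map_mul ha₄ hn.le (by omega)
  rw [Affine.equation_iff, show y ^ 2 + W.a₁ * x * y + W.a₃ * y = y * (y + (W.a₁ * x + W.a₃)) by
    ring] at hP
  refine v.map_mul_add_ne (n := n) ?_ (hP ▸ hrhs)
  exact v.map_le_add (v.coe_le_map_mul ha₁ hn.le (by omega))
    ((WithTop.coe_le_coe.2 (by omega)).trans ha₃)

theorem valuation_eval_Ψ₃_of_valuation_eval_Φ_two {c : ℤ}
    (hΦ : v ((W.Φ 2).eval x) = c) (hΨ₂Sq : ((c + 1 : ℤ) : WithTop ℤ) ≤ v (x * W.Ψ₂Sq.eval x)) :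
    v (W.Ψ₃.eval x) = c := by
  refine v.map_eq_coe_of_sub (x := -(W.Φ 2).eval x) (by rw [v.map_neg, hΦ]) ?_
  rwa [eval_Ψ₃_eq, sub_neg_eq_add, sub_add_cancel]

theorem coe_le_valuation_eval_Ψ₂Sq_of_one_le (h2 : ((1 : ℤ) : WithTop ℤ) ≤ v 2)
    (hb₂ : ((2 : ℤ) : WithTop ℤ) ≤ v W.b₂) (hb₄ : ((2 : ℤ) : WithTop ℤ) ≤ v W.b₄)
    (hb₆ : ((4 : ℤ) : WithTop ℤ) ≤ v W.b₆) (hx : ((1 : ℤ) : WithTop ℤ) ≤ v x) :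
    ((4 : ℤ) : WithTop ℤ) ≤ v (W.Ψ₂Sq.eval x) := by
  rw [eval_Ψ₂Sq]
  refine v.map_le_add (v.map_le_add (v.map_le_add ?_ ?_) ?_) hb₆
  · exact v.coe_le_map_mul (v.coe_le_map_four h2) (v.coe_le_map_pow (c := 3) hx (by omega))
      (by omega)
  · exact v.coe_le_map_mul hb₂ (v.coe_le_map_pow (c := 2) hx (by omega)) (by omega)
  · exact v.coe_le_map_mul (v.coe_le_map_mul (c := 3) h2 hb₄ (by omega)) hx (by omega)

theorem valuation_eval_Φ_two_of_eq_one (h2 : ((1 : ℤ) : WithTop ℤ) ≤ v 2)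
    (hb₄ : ((3 : ℤ) : WithTop ℤ) ≤ v W.b₄) (hb₆ : ((3 : ℤ) : WithTop ℤ) ≤ v W.b₆)
    (hb₈ : ((5 : ℤ) : WithTop ℤ) ≤ v W.b₈) (hx : v x = ((1 : ℤ) : WithTop ℤ)) :
    v ((W.Φ 2).eval x) = ((4 : ℤ) : WithTop ℤ) := by
  refine v.map_eq_coe_of_sub (x := x ^ 4) (v.map_pow_of_eq_coe 4 hx) ?_
  rw [eval_Φ_two, show x ^ 4 - W.b₄ * x ^ 2 - 2 * W.b₆ * x - W.b₈ - x ^ 4 =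
    -(W.b₄ * x ^ 2 + 2 * W.b₆ * x + W.b₈) by ring, v.map_neg]
  refine v.map_le_add (v.map_le_add ?_ ?_) hb₈
  · exact v.coe_le_map_mul hb₄ (v.coe_le_map_pow (c := 2) hx.ge (by omega)) (by omega)
  · exact v.coe_le_map_mul (v.coe_le_map_mul (c := 4) h2 hb₆ (by omega)) hx.ge (by omega)

theorem coe_le_valuation_eval_Ψ₂Sq_of_le (hk : 0 ≤ k) (h2 : ((1 : ℤ) : WithTop ℤ) ≤ v 2)
    (hb₂ : ((2 : ℤ) : WithTop ℤ) ≤ v W.b₂) (hb₄ : ((k + 3 : ℤ) : WithTop ℤ) ≤ v W.b₄)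
    (hb₆ : ((2 * k + 4 : ℤ) : WithTop ℤ) ≤ v W.b₆) (hx : ((k + 1 : ℤ) : WithTop ℤ) ≤ v x) :
    ((2 * k + 4 : ℤ) : WithTop ℤ) ≤ v (W.Ψ₂Sq.eval x) := by
  rw [eval_Ψ₂Sq]
  refine v.map_le_add (v.map_le_add (v.map_le_add ?_ ?_) ?_) hb₆
  · exact v.coe_le_map_mul (v.coe_le_map_four h2) (v.coe_le_map_pow (c := 3 * k + 3) hx (by omega))
      (by omega)
  · exact v.coe_le_map_mul hb₂ (v.coe_le_map_pow (c := 2 * k + 2) hx (by omega)) (by omega)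
  · exact v.coe_le_map_mul (v.coe_le_map_mul (c := k + 4) h2 hb₄ (by omega)) hx (by omega)

theorem valuation_eval_Φ_two_of_le (hk : 1 ≤ k) (h2 : ((1 : ℤ) : WithTop ℤ) ≤ v 2)
    (hb₄ : ((k + 3 : ℤ) : WithTop ℤ) ≤ v W.b₄) (hb₆ : ((2 * k + 4 : ℤ) : WithTop ℤ) ≤ v W.b₆)
    (hb₈ : v W.b₈ = ((2 * k + 4 : ℤ) : WithTop ℤ)) (hx : ((k + 1 : ℤ) : WithTop ℤ) ≤ v x) :
    v ((W.Φ 2).eval x) = ((2 * k + 4 : ℤ) : WithTop ℤ) := by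
  refine v.map_eq_coe_of_sub (x := -W.b₈) (by rw [v.map_neg, hb₈]) ?_
  rw [eval_Φ_two, show x ^ 4 - W.b₄ * x ^ 2 - 2 * W.b₆ * x - W.b₈ - -W.b₈ =
    x ^ 4 - W.b₄ * x ^ 2 - 2 * W.b₆ * x by ring]
  refine v.map_le_sub (v.map_le_sub ?_ ?_) ?_
  · exact v.coe_le_map_pow hx (by omega)
  · exact v.coe_le_map_mul hb₄ (v.coe_le_map_pow (c := 2 * k + 2) hx (by omega)) (by omega)
  · exact v.coe_le_map_mul (v.coe_le_map_mul (c := 2 * k + 5) h2 hb₆ (by omega)) hx (by omega)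

end WeierstrassCurve

theorem greatest_common_valuation_stmt_9_general {K : Type*} [Field K]
    (v : K → WithTop ℤ)
    (hv_top : ∀ z : K, v z = ⊤ ↔ z = 0)
    (hv_mul : ∀ z w : K, v (z * w) = v z + v w)
    (hv_add : ∀ z w : K, min (v z) (v w) ≤ v (z + w))
    (hv2 : 0 < v (2 : K))
    (k : ℤ) (hk : 1 ≤ k)
    (W : WeierstrassCurve K)
    (ha₁ : 1 ≤ v W.a₁) (ha₂ : v W.a₂ = 1)
    (ha₃ : ((k + 2 : ℤ) : WithTop ℤ) ≤ v W.a₃)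
    (ha₄ : v W.a₄ = ((k + 2 : ℤ) : WithTop ℤ))
    (ha₆ : ((2 * k + 3 : ℤ) : WithTop ℤ) ≤ v W.a₆)
    (x y : K) (hP : W.toAffine.Equation x y) :
    (v x = 1 →
      v ((W.Φ 2).eval x) = ((4 : ℤ) : WithTop ℤ) ∧
      v (W.Ψ₃.eval x) = ((4 : ℤ) : WithTop ℤ) ∧
      ((4 : ℤ) : WithTop ℤ) ≤ v (W.Ψ₂Sq.eval x)) ∧
    (0 < v y → ¬ (1 < v x ∧ v x < ((k + 1 : ℤ) : WithTop ℤ))) ∧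
    (((k + 1 : ℤ) : WithTop ℤ) ≤ v x →
      v ((W.Φ 2).eval x) = ((2 * k + 4 : ℤ) : WithTop ℤ) ∧
      v (W.Ψ₃.eval x) = ((2 * k + 4 : ℤ) : WithTop ℤ) ∧
      ((2 * k + 4 : ℤ) : WithTop ℤ) ≤ v (W.Ψ₂Sq.eval x)) := by
  have hv_one : v 1 = 0 :=
    WithTop.eq_zero_of_eq_add_self (by simp [hv_top]) (by simpa using hv_mul 1 1)
  let V : AddValuation K (WithTop ℤ) := .of v ((hv_top 0).2 rfl) hv_one hv_add hv_mul
  have h2 : ((1 : ℤ) : WithTop ℤ) ≤ V 2 := WithTop.coe_add_one_le_of_lt hv2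
  have hb₂ := W.coe_le_valuation_b₂ V h2 ha₁ ha₂.ge
  have hb₄ := W.coe_le_valuation_b₄ V h2 ha₁ ha₃ ha₄.ge
  have hb₆ := W.coe_le_valuation_b₆ V h2 ha₃ ha₆
  have hb₈ := W.valuation_b₈ V h2 ha₁ ha₂.ge ha₃ ha₄ ha₆
  refine ⟨fun hx => ?_, fun _ => W.valuation_x_notMem_Ioo V ha₁ ha₂ ha₃ ha₄.ge ha₆ hP,
    fun hx => ?_⟩
  · have hΦ := W.valuation_eval_Φ_two_of_eq_one V h2 ((WithTop.coe_le_coe.2 (by omega)).trans hb₄)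
      ((WithTop.coe_le_coe.2 (by omega)).trans hb₆)
      ((WithTop.coe_le_coe.2 (by omega)).trans hb₈.ge) hx
    have hΨ₂Sq := W.coe_le_valuation_eval_Ψ₂Sq_of_one_le V h2 hb₂
      ((WithTop.coe_le_coe.2 (by omega)).trans hb₄)
      ((WithTop.coe_le_coe.2 (by omega)).trans hb₆) hx.ge
    exact ⟨hΦ, W.valuation_eval_Ψ₃_of_valuation_eval_Φ_two V hΦ
      (V.coe_le_map_mul hx.ge hΨ₂Sq (by omega)), hΨ₂Sq⟩
  · have hΦ := W.valuation_eval_Φ_two_of_le V hk h2 hb₄ hb₆ hb₈ hx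
    have hΨ₂Sq := W.coe_le_valuation_eval_Ψ₂Sq_of_le V (by omega) h2 hb₂ hb₄ hb₆ hx
    exact ⟨hΦ, W.valuation_eval_Ψ₃_of_valuation_eval_Φ_two V hΦ
      (V.coe_le_map_mul hx hΨ₂Sq (by omega)), hΨ₂Sq⟩

/-- (Kodaira type `I_m^*`, `m = 2k` even, residue characteristic `2`.)
Let `K` be a field with a normalised discrete valuation `v` with uniformiser `π`, suppose
`v(2) > 0`, and let `k ≥ 1`.  Let `E/K` be a Weierstrass curve with `v(a₁) ≥ 1`, `v(a₂) = 1`,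
`v(a₃) ≥ k + 2`, `v(a₄) = k + 2` and `v(a₆) ≥ 2k + 3`.  Let `P = (x, y)` be a point on `E`
with `v(x) > 0` satisfying the Weierstrass equation.  Then:
(a) if `v(x) = 1`, then `v(φ₂(P)) = v(ψ₃(P)) = 4` and `v(ψ₂²(P)) ≥ 4`;
(b) the range `1 < v(x) < k + 1` is impossible for a point with `v(y) > 0`;
(c) if `v(x) ≥ k + 1`, then `v(φ₂(P)) = v(ψ₃(P)) = 2k + 4` and `v(ψ₂²(P)) ≥ 2k + 4`. -/
theorem greatest_common_valuation_stmt_9 {K : Type*} [Field K]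
    (v : K → WithTop ℤ)
    (hv_top : ∀ z : K, v z = ⊤ ↔ z = 0)
    (hv_mul : ∀ z w : K, v (z * w) = v z + v w)
    (hv_add : ∀ z w : K, min (v z) (v w) ≤ v (z + w))
    (π : K) (hπ : v π = 1)
    (hv2 : 0 < v (2 : K))
    (k : ℤ) (hk : 1 ≤ k)
    (W : WeierstrassCurve K)
    (ha₁ : 1 ≤ v W.a₁) (ha₂ : v W.a₂ = 1)
    (ha₃ : ((k + 2 : ℤ) : WithTop ℤ) ≤ v W.a₃)
    (ha₄ : v W.a₄ = ((k + 2 : ℤ) : WithTop ℤ))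
    (ha₆ : ((2 * k + 3 : ℤ) : WithTop ℤ) ≤ v W.a₆)
    (x y : K) (hP : W.toAffine.Equation x y) (hx : 0 < v x) :
    (v x = 1 →
      v ((W.Φ 2).eval x) = ((4 : ℤ) : WithTop ℤ) ∧
      v (W.Ψ₃.eval x) = ((4 : ℤ) : WithTop ℤ) ∧
      ((4 : ℤ) : WithTop ℤ) ≤ v (W.Ψ₂Sq.eval x)) ∧
    (0 < v y → ¬ (1 < v x ∧ v x < ((k + 1 : ℤ) : WithTop ℤ))) ∧
    (((k + 1 : ℤ) : WithTop ℤ) ≤ v x →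
      v ((W.Φ 2).eval x) = ((2 * k + 4 : ℤ) : WithTop ℤ) ∧
      v (W.Ψ₃.eval x) = ((2 * k + 4 : ℤ) : WithTop ℤ) ∧
      ((2 * k + 4 : ℤ) : WithTop ℤ) ≤ v (W.Ψ₂Sq.eval x)) :=
  greatest_common_valuation_stmt_9_general v hv_top hv_mul hv_add hv2 k hk W ha₁ ha₂ ha₃ ha₄ ha₆ x y
    hP
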